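/- Let p be prime, 0 ≤ L < L+N < p, and ℓ, k ≥ 1 integers, and let K ≥ 1 be an integer with L+N+K < p. Then ∑_{a=0}^{p−1} |S_a(L,N)|^{2ℓ} ≤ C · (N^{2ℓ} K^{−ℓ} + N^{2ℓ−1} K + K^{2ℓ}) · p, where S_a(L,N) = ∑_{n=L+1}^{L+N} e(a n!/p) and C depends only on ℓ. -/

import Mathlib

/-- `Ssum p a L N = ∑_{n=L+1}^{L+N} e(a n!/p)`. -/
noncomputable def Ssum (p a L N : ℕ) : ℂ :=
  ∑ n ∈ Finset.Icc (L + 1) (L + N),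
    Complex.exp (2 * Real.pi * Complex.I * ((a : ℤ) * (Nat.factorial n : ℤ)) / p)

/-!
Shifting the range of summation by `k ≤ K` changes `S_a(L,N)` by at most `2k`, so `K S_a`
equals `W_a = ∑_n ∑_{k ≤ K} e(a (n+k)!/p)` up to `O(K²)`. By Hölder's inequality and
orthogonality, `∑_a |W_a|^{2ℓ}` is at most `N^{2ℓ-1} p` times the number of triples
`(n, g, h) ∈ (L, L+N] × [1,K]^ℓ × [1,K]^ℓ` with `∑ᵢ (n + gᵢ)! ≡ ∑ᵢ (n + hᵢ)! (mod p)`.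
As `(n+k)! = n! ⋅ (n+1)(n+2)⋯(n+k)`, this congruence says that `n + 1` is a root of
`∑ᵢ P_{gᵢ} - ∑ᵢ P_{hᵢ}`, where `P_k = X(X+1)⋯(X+k-1)` has degree `k`. A nonzero such
polynomial has at most `K` roots; it vanishes only if `h` is a permutation of `g`, by linear
independence of the `P_k` (for `p > ℓ`; for `p ≤ ℓ` the trivial count suffices).
-/

open Finset Polynomial

open scoped Nat

namespace AddChar

variable {R : Type*} [CommRing R]

lemma map_sum_eq_prod {M : Type*} [CommMonoid M] (ψ : AddChar R M) {ι : Type*} (s : Finset ι)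
    (f : ι → R) : ψ (∑ i ∈ s, f i) = ∏ i ∈ s, ψ (f i) := by
  induction s using Finset.cons_induction with
  | empty => simp
  | cons i s hi ih => rw [sum_cons, prod_cons, map_add_eq_mul, ih]

lemma sum_apply_mul_pow (ψ : AddChar R ℂ) {ι : Type*} (s : Finset ι) (f : ι → R) (a : R)
    (l : ℕ) :
    (∑ k ∈ s, ψ (a * f k)) ^ l
      = ∑ g ∈ Fintype.piFinset fun _ : Fin l => s, ψ (a * ∑ i, f (g i)) := by
  rw [← Fin.prod_const, prod_univ_sum]
  simp_rw [mul_sum, map_sum_eq_prod]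

lemma sum_norm_sum_apply_mul_pow [Fintype R] [DecidableEq R] {ψ : AddChar R ℂ}
    (hψ : ψ.IsPrimitive) {ι : Type*} (s : Finset ι) (f : ι → R) (l : ℕ) :
    ∑ a, ‖∑ k ∈ s, ψ (a * f k)‖ ^ (2 * l)
      = Fintype.card R * #{gh ∈ (Fintype.piFinset fun _ : Fin l => s) ×ˢ
          (Fintype.piFinset fun _ : Fin l => s) | ∑ i, f (gh.1 i) = ∑ i, f (gh.2 i)} := by
  have hnorm (a : R) : (‖∑ k ∈ s, ψ (a * f k)‖ ^ (2 * l) : ℂ)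
      = ∑ gh ∈ (Fintype.piFinset fun _ : Fin l => s) ×ˢ (Fintype.piFinset fun _ : Fin l => s),
          ψ (a * (∑ i, f (gh.1 i) - ∑ i, f (gh.2 i))) := by
    rw [pow_mul, ← Complex.mul_conj', mul_pow, ← map_pow, sum_apply_mul_pow, map_sum,
      sum_mul_sum, sum_product]
    refine sum_congr rfl fun g _ => sum_congr rfl fun h _ => ?_
    rw [← map_neg_eq_conj, ← map_add_eq_mul, mul_sub, sub_eq_add_neg]
  apply Complex.ofReal_injective
  push_cast
  simp_rw [hnorm]
  rw [sum_comm]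
  simp_rw [sum_mulShift _ hψ]
  simp only [sub_eq_zero, Nat.cast_ite, Nat.cast_zero, sum_ite, sum_const_zero, add_zero,
    sum_const, nsmul_eq_mul, mul_comm]

end AddChar

lemma norm_sum_sub_sum_le_card_sdiff_add {E : Type*} [SeminormedAddCommGroup E] {u : ℕ → E}
    (hu : ∀ n, ‖u n‖ ≤ 1) (s t : Finset ℕ) :
    ‖∑ n ∈ s, u n - ∑ n ∈ t, u n‖ ≤ #(s \ t) + #(t \ s) := by
  have hcard (r : Finset ℕ) : ‖∑ n ∈ r, u n‖ ≤ #r := by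
    simpa using norm_sum_le_of_le r fun n _ => hu n
  rw [← sum_sdiff_sub_sum_sdiff]
  exact (norm_sub_le _ _).trans (add_le_add (hcard _) (hcard _))

lemma norm_sum_Icc_sub_sum_Icc_add_le {E : Type*} [SeminormedAddCommGroup E] {u : ℕ → E}
    (hu : ∀ n, ‖u n‖ ≤ 1) (a b k : ℕ) :
    ‖∑ n ∈ Icc a b, u n - ∑ n ∈ Icc a b, u (n + k)‖ ≤ 2 * k := by
  have hshift : ∑ n ∈ Icc a b, u (n + k) = ∑ n ∈ Icc (a + k) (b + k), u n := by
    rw [← map_add_right_Icc, sum_map]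
    rfl
  have hleft : #(Icc a b \ Icc (a + k) (b + k)) ≤ k := calc
    _ ≤ #(Ico a (a + k)) :=
      card_le_card fun n => by simp only [mem_sdiff, mem_Icc, mem_Ico]; omega
    _ = k := by simp
  have hright : #(Icc (a + k) (b + k) \ Icc a b) ≤ k := calc
    _ ≤ #(Ioc b (b + k)) :=
      card_le_card fun n => by simp only [mem_sdiff, mem_Icc, mem_Ioc]; omega
    _ = k := by simp
  rw [hshift]
  refine (norm_sum_sub_sum_le_card_sdiff_add hu _ _).trans ?_
  rw [two_mul]
  exact add_le_add (mod_cast hleft) (mod_cast hright)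

lemma norm_sum_Icc_le_norm_sum_shifts_div_add {E : Type*} [NormedAddCommGroup E]
    [NormedSpace ℝ E] {u : ℕ → E} (hu : ∀ n, ‖u n‖ ≤ 1) (a b : ℕ) {K : ℕ}
    (hK : 0 < K) :
    ‖∑ n ∈ Icc a b, u n‖
      ≤ ‖∑ n ∈ Icc a b, ∑ k ∈ Icc 1 K, u (n + k)‖ / K + 2 * K := by
  set S := ∑ n ∈ Icc a b, u n
  set W := ∑ n ∈ Icc a b, ∑ k ∈ Icc 1 K, u (n + k)
  have hdecomp : K • S = W + ∑ k ∈ Icc 1 K, (S - ∑ n ∈ Icc a b, u (n + k)) := by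
    rw [sum_sub_distrib, sum_const, Nat.card_Icc, Nat.add_sub_cancel, sum_comm]
    abel
  have hKS : K * ‖S‖ ≤ ‖W‖ + K * (2 * K) := calc
    K * ‖S‖ = ‖K • S‖ := by rw [RCLike.norm_nsmul ℝ, nsmul_eq_mul]
    _ ≤ ‖W‖ + ∑ k ∈ Icc 1 K, ‖S - ∑ n ∈ Icc a b, u (n + k)‖ := by
      rw [hdecomp]
      exact (norm_add_le _ _).trans (add_le_add le_rfl (norm_sum_le _ _))
    _ ≤ ‖W‖ + ∑ k ∈ Icc 1 K, 2 * (K : ℝ) := by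
      gcongr with k hk
      exact (norm_sum_Icc_sub_sum_Icc_add_le hu a b k).trans
        (by gcongr; exact_mod_cast (mem_Icc.mp hk).2)
    _ = ‖W‖ + K * (2 * K) := by simp
  have hKpos : (0 : ℝ) < K := by exact_mod_cast hK
  rw [div_add' _ _ _ hKpos.ne', le_div_iff₀ hKpos]
  linarith

lemma Nat.cast_factorial_add_eq_mul_eval_ascPochhammer {S : Type*} [Semiring S] (n k : ℕ) :
    ((n + k)! : S) = n ! * (ascPochhammer S k).eval ((n : S) + 1) := by
  rw [← Nat.factorial_mul_ascFactorial, Nat.cast_mul, Nat.cast_ascFactorial, Nat.cast_succ]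

lemma Polynomial.linearIndependent_ascPochhammer (R : Type*) [CommRing R] [IsDomain R] :
    LinearIndependent R (ascPochhammer R) :=
  Sequence.linearIndependent ⟨ascPochhammer R, fun i => by
    rw [degree_eq_natDegree (monic_ascPochhammer R i).ne_zero, ascPochhammer_natDegree]⟩

lemma Polynomial.card_filter_isRoot_le {R α : Type*} [CommRing R] [IsDomain R] [DecidableEq R]
    {Q : R[X]} (hQ : Q ≠ 0) {s : Finset α} {f : α → R} (hf : Set.InjOn f s) :
    #{x ∈ s | Q.IsRoot (f x)} ≤ Q.natDegree := by
  rw [← card_image_of_injOn (hf.mono (filter_subset _ s))]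
  refine card_le_degree_of_subset_roots fun y hy => ?_
  obtain ⟨x, hx, rfl⟩ := mem_image.mp hy
  exact (mem_roots hQ).mpr (mem_filter.mp hx).2

lemma exists_perm_eq_comp_of_card_fiber_eq {ι α : Type*} [Fintype ι] [DecidableEq α]
    {g h : ι → α} (hgh : ∀ d, #{i | g i = d} = #{i | h i = d}) :
    ∃ σ : Equiv.Perm ι, g = h ∘ σ := by
  let e (d : α) : {i // g i = d} ≃ {i // h i = d} :=
    Fintype.equivOfCardEq (by simpa only [Fintype.card_subtype] using hgh d)
  exact ⟨Equiv.ofFiberEquiv e, funext fun i => (Equiv.ofFiberEquiv_map e i).symm⟩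

lemma card_filter_exists_perm_le {α : Type*} [DecidableEq α] {l : ℕ}
    (T : Finset (Fin l → α)) :
    #{gh ∈ T ×ˢ T | ∃ σ : Equiv.Perm (Fin l), gh.1 = gh.2 ∘ σ} ≤ l ! * #T := by
  have horbit (h : Fin l → α) :
      #{g ∈ T | ∃ σ : Equiv.Perm (Fin l), g = h ∘ σ} ≤ l ! := calc
    _ ≤ #(univ.image fun σ : Equiv.Perm (Fin l) => h ∘ σ) :=
      card_le_card fun g hg => by
        obtain ⟨σ, rfl⟩ := (mem_filter.mp hg).2
        exact mem_image_of_mem _ (mem_univ σ)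
    _ ≤ #(univ : Finset (Equiv.Perm (Fin l))) := card_image_le
    _ = l ! := by rw [card_univ, Fintype.card_perm, Fintype.card_fin]
  rw [card_filter, sum_product_right, mul_comm, ← smul_eq_mul, ← sum_const]
  exact sum_le_sum fun h _ => by simpa only [card_filter] using horbit h

noncomputable def sumAscPochhammer (R : Type*) [CommRing R] {ι : Type*} [Fintype ι]
    (g : ι → ℕ) : R[X] :=
  ∑ i, ascPochhammer R (g i)

section sumAscPochhammer

variable {ι : Type*} [Fintype ι]

lemma natDegree_sumAscPochhammer_le {R : Type*} [CommRing R] [IsDomain R] {g : ι → ℕ} {K : ℕ}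
    (hg : ∀ i, g i ≤ K) : (sumAscPochhammer R g).natDegree ≤ K :=
  natDegree_sum_le_of_forall_le _ _ fun i _ => (ascPochhammer_natDegree R (g i)).trans_le (hg i)

lemma sum_cast_factorial_add_eq_iff_isRoot {F : Type*} [Field F] {n : ℕ} (hn : (n ! : F) ≠ 0)
    (g h : ι → ℕ) :
    ∑ i, ((n + g i)! : F) = ∑ i, ((n + h i)! : F)
      ↔ (sumAscPochhammer F g - sumAscPochhammer F h).IsRoot ((n : F) + 1) := by
  simp only [Nat.cast_factorial_add_eq_mul_eval_ascPochhammer, ← mul_sum, IsRoot, eval_sub,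
    sumAscPochhammer, eval_finsetSum, sub_eq_zero]
  exact mul_right_inj' hn

variable {p : ℕ} [Fact p.Prime]

lemma exists_perm_of_sumAscPochhammer_eq (hιp : Fintype.card ι < p) {g h : ι → ℕ}
    (hgh : sumAscPochhammer (ZMod p) g = sumAscPochhammer (ZMod p) h) :
    ∃ σ : Equiv.Perm ι, g = h ∘ σ := by
  have hcomb (f : ι → ℕ) : sumAscPochhammer (ZMod p) f
      = Finsupp.linearCombination (ZMod p) (ascPochhammer (ZMod p))
          (∑ i, Finsupp.single (f i) 1) := by
    simp [sumAscPochhammer, map_sum]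
  rw [hcomb, hcomb] at hgh
  have hfinsupp := (linearIndependent_ascPochhammer (ZMod p)) hgh
  refine exists_perm_eq_comp_of_card_fiber_eq fun d => ?_
  have hmod := DFunLike.congr_fun hfinsupp d
  simp only [Finsupp.finsetSum_apply, Finsupp.single_apply, sum_boole] at hmod
  have hlt (f : ι → ℕ) : #{i | f i = d} < p := (card_filter_le _ _).trans_lt hιp
  rw [← ZMod.val_cast_of_lt (hlt g), ← ZMod.val_cast_of_lt (hlt h)]
  exact congrArg ZMod.val hmod

lemma card_filter_sum_factorial_eq_le {L N K : ℕ} (hLN : L + N < p) {g h : ι → ℕ}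
    (hg : ∀ i, g i ≤ K) (hh : ∀ i, h i ≤ K) :
    #{n ∈ Icc (L + 1) (L + N) | ∑ i, ((n + g i)! : ZMod p) = ∑ i, ((n + h i)! : ZMod p)}
      ≤ if sumAscPochhammer (ZMod p) g = sumAscPochhammer (ZMod p) h then N else K := by
  split_ifs with hgh
  · exact (card_filter_le _ _).trans (by simp)
  have hlt {n : ℕ} (hn : n ∈ Icc (L + 1) (L + N)) : n < p := by
    have := (mem_Icc.mp hn).2
    omega
  have hinj : Set.InjOn (fun n : ℕ => (n : ZMod p) + 1) (Icc (L + 1) (L + N)) :=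
    fun m hm n hn hmn => by
      simpa [ZMod.val_cast_of_lt (hlt hm), ZMod.val_cast_of_lt (hlt hn)] using
        congrArg ZMod.val (add_right_cancel hmn)
  rw [filter_congr fun n hn => sum_cast_factorial_add_eq_iff_isRoot
    ((ZMod.natCast_eq_zero_iff _ _).not.mpr fun hdvd => (hlt hn).not_ge
      ((Fact.out : p.Prime).dvd_factorial.mp hdvd)) g h]
  exact (card_filter_isRoot_le (sub_ne_zero.mpr hgh) hinj).trans
    ((natDegree_sub_le _ _).trans (max_le (natDegree_sumAscPochhammer_le hg)
      (natDegree_sumAscPochhammer_le hh)))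

end sumAscPochhammer

def shiftTuples (l K : ℕ) : Finset (Fin l → ℕ) :=
  Fintype.piFinset fun _ => Icc 1 K

lemma card_shiftTuples (l K : ℕ) : #(shiftTuples l K) = K ^ l := by
  simp [shiftTuples]

lemma le_of_mem_shiftTuples {l K : ℕ} {g : Fin l → ℕ} (hg : g ∈ shiftTuples l K)
    (i : Fin l) : g i ≤ K :=
  (mem_Icc.mp (Fintype.mem_piFinset.mp hg i)).2

noncomputable def factorialCollisions (p l K n : ℕ) : ℕ :=
  #{gh ∈ shiftTuples l K ×ˢ shiftTuples l K |
    ∑ i, ((n + gh.1 i)! : ZMod p) = ∑ i, ((n + gh.2 i)! : ZMod p)}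

section Counting

variable {p : ℕ} [Fact p.Prime]

lemma card_filter_sumAscPochhammer_eq_le {l K : ℕ} (hKp : K < p) :
    #{gh ∈ shiftTuples l K ×ˢ shiftTuples l K |
        sumAscPochhammer (ZMod p) gh.1 = sumAscPochhammer (ZMod p) gh.2}
      ≤ (l ! + l ^ l) * K ^ l := by
  rcases lt_or_ge l p with hlp | hpl
  · calc _ ≤ #{gh ∈ shiftTuples l K ×ˢ shiftTuples l K |
              ∃ σ : Equiv.Perm (Fin l), gh.1 = gh.2 ∘ σ} :=
          card_le_card fun gh hgh => by
            rw [mem_filter] at hgh ⊢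
            exact ⟨hgh.1, exists_perm_of_sumAscPochhammer_eq (by simpa using hlp) hgh.2⟩
      _ ≤ l ! * K ^ l := card_shiftTuples l K ▸ card_filter_exists_perm_le _
      _ ≤ (l ! + l ^ l) * K ^ l := by gcongr; omega
  · calc _ ≤ #(shiftTuples l K ×ˢ shiftTuples l K) := card_filter_le _ _
      _ = K ^ l * K ^ l := by rw [card_product, card_shiftTuples]
      _ ≤ (l ! + l ^ l) * K ^ l := by
          gcongr
          exact le_add_left (Nat.pow_le_pow_left (by omega) l)

lemma sum_factorialCollisions_le {l L N K : ℕ} (hLN : L + N < p) (hKp : K < p) :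
    ∑ n ∈ Icc (L + 1) (L + N), factorialCollisions p l K n
      ≤ (l ! + l ^ l) * K ^ l * N + K ^ (2 * l + 1) := by
  let T := shiftTuples l K ×ˢ shiftTuples l K
  have hpair (gh) (hgh : gh ∈ T) := card_filter_sum_factorial_eq_le hLN
    (le_of_mem_shiftTuples (mem_product.mp hgh).1) (le_of_mem_shiftTuples (mem_product.mp hgh).2)
  calc ∑ n ∈ Icc (L + 1) (L + N), factorialCollisions p l K n
      = ∑ gh ∈ T, #{n ∈ Icc (L + 1) (L + N) |
          ∑ i, ((n + gh.1 i)! : ZMod p) = ∑ i, ((n + gh.2 i)! : ZMod p)} := by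
        simp only [factorialCollisions, card_filter]
        exact sum_comm
    _ ≤ ∑ gh ∈ T, if sumAscPochhammer (ZMod p) gh.1 = sumAscPochhammer (ZMod p) gh.2
          then N else K := sum_le_sum hpair
    _ ≤ #{gh ∈ T | sumAscPochhammer (ZMod p) gh.1 = sumAscPochhammer (ZMod p) gh.2} * N
          + #T * K := by
        rw [sum_ite, sum_const, sum_const, smul_eq_mul, smul_eq_mul]
        gcongr
        exact filter_subset _ _
    _ ≤ (l ! + l ^ l) * K ^ l * N + K ^ (2 * l + 1) := by
        rw [card_product, card_shiftTuples, ← pow_add, ← pow_succ, two_mul]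
        gcongr
        exact card_filter_sumAscPochhammer_eq_le hKp

end Counting

lemma Finset.sum_range_eq_sum_zmod {M : Type*} [AddCommMonoid M] (p : ℕ) [NeZero p]
    (f : ZMod p → M) : ∑ a ∈ range p, f a = ∑ a, f a :=
  sum_nbij' (↑) ZMod.val (by simp) (by simp [ZMod.val_lt])
    (fun a ha => ZMod.val_cast_of_lt (mem_range.mp ha)) (by simp) (by simp)

lemma Ssum_eq_sum_stdAddChar (p a L N : ℕ) [NeZero p] :
    Ssum p a L N = ∑ n ∈ Icc (L + 1) (L + N), ZMod.stdAddChar ((a : ZMod p) * (n ! : ZMod p)) :=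
  sum_congr rfl fun n _ => by simpa using (ZMod.stdAddChar_coe (N := p) (a * n !)).symm

lemma sum_norm_sum_shifts_pow_le {p : ℕ} [Fact p.Prime] (l L N K : ℕ) (hl : 1 ≤ l) :
    ∑ a : ZMod p, ‖∑ n ∈ Icc (L + 1) (L + N), ∑ k ∈ Icc 1 K,
        ZMod.stdAddChar (a * ((n + k)! : ZMod p))‖ ^ (2 * l)
      ≤ N ^ (2 * l - 1) * p * ∑ n ∈ Icc (L + 1) (L + N), factorialCollisions p l K n := by
  have hholder (a : ZMod p) : ‖∑ n ∈ Icc (L + 1) (L + N), ∑ k ∈ Icc 1 K,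
        ZMod.stdAddChar (a * ((n + k)! : ZMod p))‖ ^ (2 * l)
      ≤ N ^ (2 * l - 1) * ∑ n ∈ Icc (L + 1) (L + N),
          ‖∑ k ∈ Icc 1 K, ZMod.stdAddChar (a * ((n + k)! : ZMod p))‖ ^ (2 * l) := by
    obtain ⟨m, hm⟩ : ∃ m, 2 * l = m + 1 := ⟨2 * l - 1, by omega⟩
    rw [hm, Nat.add_sub_cancel]
    refine (pow_le_pow_left₀ (norm_nonneg _) (norm_sum_le _ _) _).trans ?_
    simpa using pow_sum_le_card_mul_sum_pow (s := Icc (L + 1) (L + N))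
      (f := fun n => ‖∑ k ∈ Icc 1 K, ZMod.stdAddChar (a * ((n + k)! : ZMod p))‖)
      (fun n _ => norm_nonneg _) m
  have hmoment (n : ℕ) : ∑ a : ZMod p,
      ‖∑ k ∈ Icc 1 K, ZMod.stdAddChar (a * ((n + k)! : ZMod p))‖ ^ (2 * l)
        = p * factorialCollisions p l K n := by
    simpa [factorialCollisions, shiftTuples] using AddChar.sum_norm_sum_apply_mul_pow
      (ZMod.isPrimitive_stdAddChar p) (Icc 1 K) (fun k => ((n + k)! : ZMod p)) l
  calc _ ≤ ∑ a : ZMod p, N ^ (2 * l - 1) * ∑ n ∈ Icc (L + 1) (L + N),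
          ‖∑ k ∈ Icc 1 K, ZMod.stdAddChar (a * ((n + k)! : ZMod p))‖ ^ (2 * l) :=
        sum_le_sum fun a _ => hholder a
    _ = _ := by
        rw [← mul_sum, sum_comm]
        simp_rw [hmoment, ← mul_sum, mul_assoc]
        push_cast
        rfl

lemma sum_norm_Ssum_pow_le {p l L N K : ℕ} [Fact p.Prime] (hl : 1 ≤ l) (hK : 0 < K)
    (hLNK : L + N + K < p) :
    ∑ a ∈ range p, ‖Ssum p a L N‖ ^ (2 * l)
      ≤ 2 ^ (2 * l - 1) * p * ((l ! + l ^ l) * (N ^ (2 * l) / K ^ l) + N ^ (2 * l - 1) * K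
          + 4 ^ l * K ^ (2 * l)) := by
  simp_rw [Ssum_eq_sum_stdAddChar]
  rw [sum_range_eq_sum_zmod p fun a => ‖∑ n ∈ Icc (L + 1) (L + N),
    ZMod.stdAddChar (a * (n ! : ZMod p))‖ ^ (2 * l)]
  set W : ZMod p → ℂ := fun a => ∑ n ∈ Icc (L + 1) (L + N), ∑ k ∈ Icc 1 K,
    ZMod.stdAddChar (a * ((n + k)! : ZMod p))
  have hshift (a : ZMod p) :
      ‖∑ n ∈ Icc (L + 1) (L + N), ZMod.stdAddChar (a * (n ! : ZMod p))‖
        ≤ ‖W a‖ / K + 2 * K :=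
    norm_sum_Icc_le_norm_sum_shifts_div_add (fun n => (AddChar.norm_apply _ _).le) _ _ hK
  have hcount : ((∑ n ∈ Icc (L + 1) (L + N), factorialCollisions p l K n : ℕ) : ℝ)
      ≤ (l ! + l ^ l) * K ^ l * N + K ^ (2 * l + 1) := by
    exact_mod_cast sum_factorialCollisions_le (by omega) (by omega)
  have hN : (N : ℝ) ^ (2 * l) = N ^ (2 * l - 1) * N := by
    rw [← pow_succ]
    congr 1
    omega
  have h4 : (2 : ℝ) ^ (2 * l) = 4 ^ l := by
    rw [pow_mul]
    norm_num
  calc _ ≤ ∑ a : ZMod p, (‖W a‖ / K + 2 * K) ^ (2 * l) :=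
        sum_le_sum fun a _ => pow_le_pow_left₀ (norm_nonneg _) (hshift a) _
    _ ≤ ∑ a : ZMod p, 2 ^ (2 * l - 1) * ((‖W a‖ / K) ^ (2 * l) + (2 * K) ^ (2 * l)) :=
        sum_le_sum fun a _ => add_pow_le (by positivity) (by positivity) _
    _ = 2 ^ (2 * l - 1) * ((∑ a : ZMod p, ‖W a‖ ^ (2 * l)) / K ^ (2 * l)
          + p * (2 * K) ^ (2 * l)) := by
        simp [← mul_sum, sum_add_distrib, sum_div, div_pow]
    _ ≤ 2 ^ (2 * l - 1) * (N ^ (2 * l - 1) * p * ((l ! + l ^ l) * K ^ l * N + K ^ (2 * l + 1))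
          / K ^ (2 * l) + p * (2 * K) ^ (2 * l)) := by
        gcongr
        exact (sum_norm_sum_shifts_pow_le l L N K hl).trans
          (mul_le_mul_of_nonneg_left hcount (by positivity))
    _ = _ := by
        rw [mul_pow, h4]
        field_simp
        rw [hN]
        ring

theorem stmt_19 (l : ℕ) (hl : 1 ≤ l) :
    ∃ C : ℝ, 0 < C ∧ ∀ (p L N K : ℕ), p.Prime →
      0 < N → L + N < p → 1 ≤ K → L + N + K < p →
      ∑ a ∈ Finset.range p, ‖Ssum p a L N‖ ^ (2 * l)
        ≤ C * ((N : ℝ) ^ (2 * l) * (K : ℝ) ^ (-(l : ℝ))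
            + (N : ℝ) ^ (2 * l - 1) * K + (K : ℝ) ^ (2 * l)) * p := by
  refine ⟨2 ^ (2 * l - 1) * (l ! + l ^ l + 4 ^ l), by positivity, ?_⟩
  intro p L N K hp _ _ hK hLNK
  have : Fact p.Prime := ⟨hp⟩
  rw [Real.rpow_neg (Nat.cast_nonneg K), Real.rpow_natCast, ← div_eq_mul_inv]
  have h4 : (1 : ℝ) ≤ 4 ^ l := one_le_pow₀ (by norm_num)
  have hx : (0 : ℝ) ≤ N ^ (2 * l) / K ^ l := by positivity
  have hy : (0 : ℝ) ≤ N ^ (2 * l - 1) * K := by positivity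
  have hz : (0 : ℝ) ≤ K ^ (2 * l) := by positivity
  calc _ ≤ _ := sum_norm_Ssum_pow_le hl hK hLNK
    _ ≤ 2 ^ (2 * l - 1) * p * ((l ! + l ^ l + 4 ^ l)
          * (N ^ (2 * l) / K ^ l + N ^ (2 * l - 1) * K + K ^ (2 * l))) := by
        gcongr
        nlinarith [show (0 : ℝ) ≤ l ! + l ^ l by positivity]
    _ = _ := by ring
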